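/- Let X and Y be compact geodesic metric spaces with finite first Betti numbers, and let (aₙ^X) and (aₙ^Y) be their persistence sequences (lengths of intervals in the first Vietoris-Rips persistence barcode, listed in non-increasing order and padded by zeros). Then ‖(aₙ^X) − (aₙ^Y)‖_∞ ≤ 4 · d_GH(X,Y). -/

import Mathlib

open scoped ENNReal unitInterval

/-- A geodesic metric space: any two points are joined by a constant-speed
length-minimizing geodesic. -/
def IsGeodesicSpace (X : Type*) [MetricSpace X] : Prop :=
  ∀ x y : X, ∃ γ : Path x y, ∀ s t : unitInterval, dist (γ s) (γ t) = |(s : ℝ) - (t : ℝ)| * dist x y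

/-- The minimum of `d(p,·)` along a path. -/
noncomputable def pathMin {X : Type*} [MetricSpace X] (p : X) {x x' : X} (γ : Path x x') : ℝ :=
  sInf (Set.range fun t => dist p (γ t))

/-- `m_p(x,x')`: the supremum over continuous paths from `x` to `x'` of the minimum of
`d(p,·)` along the path. -/
noncomputable def mFn {X : Type*} [MetricSpace X] (p x x' : X) : ℝ :=
  sSup {m | ∃ γ : Path x x', m = pathMin p γ}

/-- The Gromov product `g_p(x,x') = (d(p,x) + d(p,x') - d(x,x'))/2`. -/
noncomputable def gromovProd {X : Type*} [MetricSpace X] (p x x' : X) : ℝ :=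
  (dist p x + dist p x' - dist x x') / 2

/-- Ordered 1-boundary map: `∂₁(x,x') = x' - x` extended linearly to 1-chains. -/
noncomputable def bdry1 (X : Type*) : ((X × X) →₀ ℚ) →ₗ[ℚ] (X →₀ ℚ) :=
  Finsupp.lsum ℚ fun e => LinearMap.toSpanSingleton ℚ (X →₀ ℚ)
    (Finsupp.single e.2 1 - Finsupp.single e.1 1)

/-- Ordered 2-boundary map: `∂₂(x,y,z) = (y,z) - (x,z) + (x,y)` extended linearly. -/
noncomputable def bdry2 (X : Type*) : ((X × X × X) →₀ ℚ) →ₗ[ℚ] ((X × X) →₀ ℚ) :=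
  Finsupp.lsum ℚ fun t => LinearMap.toSpanSingleton ℚ ((X × X) →₀ ℚ)
    (Finsupp.single (t.2.1, t.2.2) 1 - Finsupp.single (t.1, t.2.2) 1
      + Finsupp.single (t.1, t.2.1) 1)

/-- Edges of the open Vietoris–Rips complex `VR^r(X)`. -/
def vrEdges (X : Type*) [MetricSpace X] (r : ℝ) : Set (X × X) :=
  {e | dist e.1 e.2 < r}

/-- (Ordered) triangles of the open Vietoris–Rips complex `VR^r(X)`:
finite subsets of diameter `< r`. -/
def vrTriangles (X : Type*) [MetricSpace X] (r : ℝ) : Set (X × X × X) :=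
  {t | dist t.1 t.2.1 < r ∧ dist t.1 t.2.2 < r ∧ dist t.2.1 t.2.2 < r}

/-- 1-cycles of `VR^r(X)` (ordered simplicial chains). -/
noncomputable def vrCycles (X : Type*) [MetricSpace X] (r : ℝ) :
    Submodule ℚ ((X × X) →₀ ℚ) where
  carrier := {c | ↑c.support ⊆ vrEdges X r ∧ bdry1 X c = 0}
  add_mem' := by
    intro a b ha hb
    classical
    refine ⟨fun e he => ?_, by simp [map_add, ha.2, hb.2]⟩
    rcases Finset.mem_union.1 (Finsupp.support_add he) with h | h
    · exact ha.1 h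
    · exact hb.1 h
  zero_mem' := ⟨by simp, by simp⟩
  smul_mem' := by
    intro q a ha
    exact ⟨fun e he => ha.1 (Finsupp.support_smul he), by simp [map_smul, ha.2]⟩

/-- 1-boundaries of `VR^r(X)`: the span of boundaries of triangles of diameter `< r`. -/
noncomputable def vrBoundaries (X : Type*) [MetricSpace X] (r : ℝ) :
    Submodule ℚ ((X × X) →₀ ℚ) :=
  Submodule.span ℚ {c | ∃ t ∈ vrTriangles X r, c = bdry2 X (Finsupp.single t 1)}

/-- First (ordered) simplicial homology of `VR^r(X)` with `ℚ` coefficients. -/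
noncomputable def vrH1 (X : Type*) [MetricSpace X] (r : ℝ) :=
  vrCycles X r ⧸ Submodule.comap (vrCycles X r).subtype (vrBoundaries X r)

noncomputable instance vrH1.addCommGroup (X : Type*) [MetricSpace X] (r : ℝ) :
    AddCommGroup (vrH1 X r) :=
  inferInstanceAs (AddCommGroup
    (vrCycles X r ⧸ Submodule.comap (vrCycles X r).subtype (vrBoundaries X r)))

noncomputable instance vrH1.module (X : Type*) [MetricSpace X] (r : ℝ) :
    Module ℚ (vrH1 X r) :=
  inferInstanceAs (Module ℚ
    (vrCycles X r ⧸ Submodule.comap (vrCycles X r).subtype (vrBoundaries X r)))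

/-- The three faces of the standard 2-simplex, as paths (singular 1-simplices,
parametrized by the unit interval). `sFace i` skips vertex `i`. -/
noncomputable def sFace (i : Fin 3) : C(unitInterval, ↥(stdSimplex ℝ (Fin 3))) where
  toFun t :=
    ⟨![![(0 : ℝ), 1 - (t : ℝ), (t : ℝ)], ![1 - (t : ℝ), 0, (t : ℝ)],
        ![1 - (t : ℝ), (t : ℝ), 0]] i, by
      constructor
      · intro j
        fin_cases i <;> fin_cases j <;>
          simp [Matrix.cons_val_zero, Matrix.cons_val_one, Matrix.head_cons] <;>
          first
            | exact le_refl _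
            | exact t.2.1
            | exact sub_nonneg.2 t.2.2
            | exact t.2.2
      · fin_cases i <;> simp [Fin.sum_univ_three]⟩
  continuous_toFun := by
    refine Continuous.subtype_mk ?_ _
    refine continuous_pi fun j => ?_
    fin_cases i <;> fin_cases j <;>
      simp [Matrix.cons_val_zero, Matrix.cons_val_one, Matrix.head_cons,
        Matrix.vecHead, Matrix.vecTail, Function.comp] <;>
      fun_prop

/-- Singular 1-boundary: `∂γ = γ(1) - γ(0)`, extended linearly. -/
noncomputable def sbdry1 (X : Type*) [TopologicalSpace X] :
    (C(unitInterval, X) →₀ ℚ) →ₗ[ℚ] (X →₀ ℚ) :=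
  Finsupp.lsum ℚ fun γ => LinearMap.toSpanSingleton ℚ (X →₀ ℚ)
    (Finsupp.single (γ 1) 1 - Finsupp.single (γ 0) 1)

/-- Singular 2-boundary: `∂σ = σ∘d₀ - σ∘d₁ + σ∘d₂`, extended linearly. -/
noncomputable def sbdry2 (X : Type*) [TopologicalSpace X] :
    (C(↥(stdSimplex ℝ (Fin 3)), X) →₀ ℚ) →ₗ[ℚ] (C(unitInterval, X) →₀ ℚ) :=
  Finsupp.lsum ℚ fun sg => LinearMap.toSpanSingleton ℚ (C(unitInterval, X) →₀ ℚ)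
    (Finsupp.single (sg.comp (sFace 0)) 1 - Finsupp.single (sg.comp (sFace 1)) 1
      + Finsupp.single (sg.comp (sFace 2)) 1)

/-- First singular homology of `X` with `ℚ` coefficients. -/
noncomputable def singularH1 (X : Type*) [TopologicalSpace X] :=
  LinearMap.ker (sbdry1 X) ⧸
    Submodule.comap (LinearMap.ker (sbdry1 X)).subtype (LinearMap.range (sbdry2 X))

noncomputable instance singularH1.addCommGroup (X : Type*) [TopologicalSpace X] :
    AddCommGroup (singularH1 X) :=
  inferInstanceAs (AddCommGroup (LinearMap.ker (sbdry1 X) ⧸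
    Submodule.comap (LinearMap.ker (sbdry1 X)).subtype (LinearMap.range (sbdry2 X))))

noncomputable instance singularH1.module (X : Type*) [TopologicalSpace X] :
    Module ℚ (singularH1 X) :=
  inferInstanceAs (Module ℚ (LinearMap.ker (sbdry1 X) ⧸
    Submodule.comap (LinearMap.ker (sbdry1 X)).subtype (LinearMap.range (sbdry2 X))))

/-- The first Betti number of a topological space: the rank of `H₁(X;ℚ)`. -/
noncomputable def firstBetti (X : Type*) [TopologicalSpace X] : Cardinal :=
  Module.rank ℚ (singularH1 X)

/-- A correspondence between `X` and `Y`. -/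
def IsCorrespondence {X Y : Type*} (R : Set (X × Y)) : Prop :=
  (∀ x : X, ∃ y : Y, (x, y) ∈ R) ∧ (∀ y : Y, ∃ x : X, (x, y) ∈ R)

/-- Distortion of a correspondence. -/
noncomputable def corrDis {X Y : Type*} [MetricSpace X] [MetricSpace Y]
    (R : Set (X × Y)) : ℝ≥0∞ :=
  ⨆ a ∈ R, ⨆ b ∈ R,
    max (edist a.1 b.1 - edist a.2 b.2) (edist a.2 b.2 - edist a.1 b.1)

/-- Gromov–Hausdorff distance. -/
noncomputable def ghDist (X Y : Type*) [MetricSpace X] [MetricSpace Y] : ℝ≥0∞ :=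
  2⁻¹ * ⨅ R ∈ {R : Set (X × Y) | IsCorrespondence R}, corrDis R

/-- The persistence sequence of `X` (0-indexed: `persSeq X n` is `a_{n+1}` in the paper).
Since for compact geodesic spaces every interval of the first Vietoris–Rips barcode has
left endpoint `0`, the `n`-th largest interval length equals
`sup {r > 0 : β₁(VR^r(X)) ≥ n}` (and `0` if there is no such `r`). -/
noncomputable def persSeq (X : Type*) [MetricSpace X] (n : ℕ) : ℝ :=
  sSup (insert 0 {r : ℝ | 0 < r ∧ (((n + 1 : ℕ) : Cardinal) ≤ Module.rank ℚ (vrH1 X r))})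

@[simp] lemma bdry1_single {X : Type*} (e : X × X) (q : ℚ) :
    bdry1 X (Finsupp.single e q) = q • (Finsupp.single e.2 1 - Finsupp.single e.1 1) := by
  simp [bdry1]
@[simp] lemma bdry2_single {X : Type*} (t : X × X × X) (q : ℚ) :
    bdry2 X (Finsupp.single t q) = q • (Finsupp.single (t.2.1, t.2.2) 1
      - Finsupp.single (t.1, t.2.2) 1 + Finsupp.single (t.1, t.2.1) 1) := by
  simp [bdry2]
lemma bdry1_comp_bdry2 (X : Type*) : (bdry1 X).comp (bdry2 X) = 0 := by
  apply Finsupp.lhom_ext; intro t q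
  simp [smul_sub, smul_add]

section Maps
variable {X Y Z : Type*}

noncomputable def C0 (f : X → Y) : (X →₀ ℚ) →ₗ[ℚ] (Y →₀ ℚ) := Finsupp.lmapDomain ℚ ℚ f
noncomputable def C1 (f : X → Y) : ((X × X) →₀ ℚ) →ₗ[ℚ] ((Y × Y) →₀ ℚ) :=
  Finsupp.lmapDomain ℚ ℚ (Prod.map f f)
noncomputable def C2 (f : X → Y) : ((X × X × X) →₀ ℚ) →ₗ[ℚ] ((Y × Y × Y) →₀ ℚ) :=
  Finsupp.lmapDomain ℚ ℚ (fun t => (f t.1, f t.2.1, f t.2.2))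

@[simp] lemma C1_single (f : X → Y) (e : X × X) (q : ℚ) :
    C1 f (Finsupp.single e q) = Finsupp.single (f e.1, f e.2) q := by
  simp [C1, Finsupp.mapDomain_single, Prod.map]

@[simp] lemma C0_single (f : X → Y) (x : X) (q : ℚ) :
    C0 f (Finsupp.single x q) = Finsupp.single (f x) q := by
  simp [C0, Finsupp.mapDomain_single]

@[simp] lemma C2_single (f : X → Y) (t : X × X × X) (q : ℚ) :
    C2 f (Finsupp.single t q) = Finsupp.single (f t.1, f t.2.1, f t.2.2) q := by
  simp [C2, Finsupp.mapDomain_single]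

lemma bdry1_comp_C1 (f : X → Y) : (bdry1 Y).comp (C1 f) = (C0 f).comp (bdry1 X) := by
  apply Finsupp.lhom_ext; intro e q
  simp [smul_sub]

lemma bdry2_comp_C2 (f : X → Y) : (bdry2 Y).comp (C2 f) = (C1 f).comp (bdry2 X) := by
  apply Finsupp.lhom_ext; intro t q
  simp [smul_sub, smul_add]

lemma C1_comp (f : X → Y) (g : Y → Z) : (C1 g).comp (C1 f) = C1 (g ∘ f) := by
  apply Finsupp.lhom_ext; intro e q; simp

lemma C1_support (f : X → Y) (c : (X × X) →₀ ℚ) :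
    ↑(C1 f c).support ⊆ Prod.map f f '' ↑c.support := by
  classical
  intro e he
  have h := Finsupp.mapDomain_support (f := Prod.map f f) (s := c)
  have := h he
  simpa using this
end Maps

lemma mem_vrBoundaries_of_support {X : Type*} [MetricSpace X] {r : ℝ}
    {c : (X × X × X) →₀ ℚ} (hc : ↑c.support ⊆ vrTriangles X r) :
    bdry2 X c ∈ vrBoundaries X r := by
  classical
  have hmem : c ∈ Finsupp.supported ℚ ℚ (vrTriangles X r) := hc
  rw [Finsupp.supported_eq_span_single] at hmem
  have := Submodule.mem_map_of_mem (f := bdry2 X) hmem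
  rw [Submodule.map_span] at this
  refine Submodule.span_le.2 ?_ this
  rintro - ⟨-, ⟨t, ht, rfl⟩, rfl⟩
  exact Submodule.subset_span ⟨t, ht, by simp⟩

section Induced
variable {X Y Z : Type*} [MetricSpace X] [MetricSpace Y] [MetricSpace Z]

/-- `f` sends edges of parameter `s` to edges of parameter `t`. -/
def EdgeContr (f : X → Y) (s t : ℝ) : Prop :=
  ∀ x x' : X, dist x x' < s → dist (f x) (f x') < t

lemma C1_mem_cycles {f : X → Y} {s t : ℝ} (hf : EdgeContr f s t) {c : (X × X) →₀ ℚ}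
    (hc : c ∈ vrCycles X s) : C1 f c ∈ vrCycles Y t := by
  obtain ⟨hsupp, hb⟩ := hc
  constructor
  · intro e he
    obtain ⟨a, ha, rfl⟩ := C1_support f c he
    exact hf _ _ (hsupp ha)
  · have h := congrArg (fun (F : ((X × X) →₀ ℚ) →ₗ[ℚ] (Y →₀ ℚ)) => F c) (bdry1_comp_C1 f)
    simp only [LinearMap.comp_apply] at h
    rw [h, hb, map_zero]

lemma C1_mem_boundaries {f : X → Y} {s t : ℝ} (hf : EdgeContr f s t) {c : (X × X) →₀ ℚ}
    (hc : c ∈ vrBoundaries X s) : C1 f c ∈ vrBoundaries Y t := by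
  have : vrBoundaries X s ≤ Submodule.comap (C1 f) (vrBoundaries Y t) := by
    rw [vrBoundaries, Submodule.span_le]
    rintro - ⟨tr, htr, rfl⟩
    have h2 := congrArg (fun (F : ((X × X × X) →₀ ℚ) →ₗ[ℚ] ((Y × Y) →₀ ℚ)) =>
      F (Finsupp.single tr 1)) (bdry2_comp_C2 f)
    simp only [LinearMap.comp_apply, C2_single] at h2
    show C1 f _ ∈ vrBoundaries Y t
    rw [← h2]
    exact Submodule.subset_span ⟨(f tr.1, f tr.2.1, f tr.2.2),
      ⟨hf _ _ htr.1, hf _ _ htr.2.1, hf _ _ htr.2.2⟩, rfl⟩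
  exact this hc

/-- The map on cycles induced by an edge-contracting vertex map. -/
noncomputable def zMap (f : X → Y) {s t : ℝ} (hf : EdgeContr f s t) :
    vrCycles X s →ₗ[ℚ] vrCycles Y t :=
  LinearMap.codRestrict _ ((C1 f).comp (vrCycles X s).subtype)
    (fun c => C1_mem_cycles hf c.2)

/-- The map on `H₁` induced by an edge-contracting vertex map. -/
noncomputable def hMap (f : X → Y) {s t : ℝ} (hf : EdgeContr f s t) :
    vrH1 X s →ₗ[ℚ] vrH1 Y t :=
  Submodule.mapQ _ _ (zMap f hf) (by
    intro z hz
    exact C1_mem_boundaries hf hz)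

lemma hMap_mk (f : X → Y) {s t : ℝ} (hf : EdgeContr f s t) (z : vrCycles X s) :
    hMap f hf (Submodule.Quotient.mk z) = Submodule.Quotient.mk (zMap f hf z) := by
  unfold hMap
  exact Submodule.mapQ_apply _ _ _ _

end Induced

section Homotopy
variable {X : Type*} [MetricSpace X]

/-- Support control for `lsum`-type operators. -/
lemma lsum_support_subset {α β : Type*} (v : α → (β →₀ ℚ)) (c : α →₀ ℚ) :
    ↑((Finsupp.lsum ℚ fun a => LinearMap.toSpanSingleton ℚ (β →₀ ℚ) (v a)) c).support ⊆
      ⋃ a ∈ (c.support : Set α), ((v a).support : Set β) := by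
  classical
  rw [Finsupp.lsum_apply]
  intro b hb
  have hb' : b ∈ (c.sum fun a q => q • v a).support := hb
  have := Finsupp.support_sum hb'
  rw [Finset.mem_biUnion] at this
  obtain ⟨a, ha, hba⟩ := this
  have : b ∈ (v a).support := Finsupp.support_smul hba
  exact Set.mem_biUnion (by exact_mod_cast ha) this

/-- Chain homotopy: if `φ` moves every `s`-edge within triangles of `VR^t`, then `φ` acts as
the identity-inclusion on cycle classes. -/
lemma homotopy_mem_boundaries {φ : X → X} {s t : ℝ}
    (htr : ∀ x x' : X, dist x x' < s →
      (x, φ x, φ x') ∈ vrTriangles X t ∧ (x, x', φ x') ∈ vrTriangles X t)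
    {c : (X × X) →₀ ℚ} (hc : c ∈ vrCycles X s) :
    C1 φ c - c ∈ vrBoundaries X t := by
  classical
  set v : X × X → ((X × X × X) →₀ ℚ) := fun e =>
    Finsupp.single (e.1, φ e.1, φ e.2) 1 - Finsupp.single (e.1, e.2, φ e.2) 1 with hv
  set h : ((X × X) →₀ ℚ) →ₗ[ℚ] ((X × X × X) →₀ ℚ) :=
    Finsupp.lsum ℚ fun e => LinearMap.toSpanSingleton ℚ _ (v e) with hh
  set k : (X →₀ ℚ) →ₗ[ℚ] ((X × X) →₀ ℚ) :=
    Finsupp.lsum ℚ fun x => LinearMap.toSpanSingleton ℚ _ (Finsupp.single (x, φ x) 1) with hk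
  have key : C1 φ = (bdry2 X).comp h + k.comp (bdry1 X) + LinearMap.id := by
    apply Finsupp.lhom_ext
    intro e q
    simp only [hh, hk, hv, LinearMap.add_apply, LinearMap.comp_apply, LinearMap.id_apply,
      bdry1_single, bdry2_single, C1_single, map_sub, map_add, map_smul,
      Finsupp.lsum_single, LinearMap.toSpanSingleton_apply, smul_sub, smul_add,
      Finsupp.smul_single, smul_eq_mul, mul_one]
    abel
  have hcb := hc.2
  have : C1 φ c - c = bdry2 X (h c) := by
    have := congrArg (fun (F : ((X × X) →₀ ℚ) →ₗ[ℚ] ((X × X) →₀ ℚ)) => F c) key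
    simp only [LinearMap.comp_apply, LinearMap.add_apply, LinearMap.id_apply] at this
    rw [hcb, map_zero] at this
    rw [this]; abel
  rw [this]
  refine mem_vrBoundaries_of_support ?_
  refine (lsum_support_subset v c).trans ?_
  refine Set.iUnion₂_subset fun e he => ?_
  have hde : dist e.1 e.2 < s := hc.1 he
  intro u hu
  have : u ∈ ((Finsupp.single (e.1, φ e.1, φ e.2) (1:ℚ)).support ∪
      (Finsupp.single (e.1, e.2, φ e.2) (1:ℚ)).support : Finset _) :=
    Finsupp.support_sub (by exact_mod_cast hu)
  rw [Finset.mem_union] at this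
  rcases this with h1 | h1 <;> rw [Finsupp.support_single_ne_zero _ one_ne_zero] at h1 <;>
    rw [Finset.mem_singleton] at h1 <;> subst h1
  · exact (htr _ _ hde).1
  · exact (htr _ _ hde).2

end Homotopy

section Subdivision
variable {X : Type*} [MetricSpace X]

/-- Midpoint in a geodesic space, via choice. -/
noncomputable def midp (hX : IsGeodesicSpace X) (x x' : X) : X :=
  (hX x x').choose ⟨1/2, by norm_num⟩

lemma midp_dist_left (hX : IsGeodesicSpace X) (x x' : X) :
    dist x (midp hX x x') = dist x x' / 2 := by
  have spec := (hX x x').choose_spec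
  have h := spec 0 ⟨1/2, by norm_num⟩
  rw [Path.source] at h
  rw [midp, h, show |((0 : unitInterval) : ℝ) - ((⟨1/2, by norm_num⟩ : unitInterval) : ℝ)| = 1/2
    by norm_num]
  ring

lemma midp_dist_right (hX : IsGeodesicSpace X) (x x' : X) :
    dist (midp hX x x') x' = dist x x' / 2 := by
  have spec := (hX x x').choose_spec
  have h := spec ⟨1/2, by norm_num⟩ 1
  rw [Path.target] at h
  rw [midp, h, show |((⟨1/2, by norm_num⟩ : unitInterval) : ℝ) - ((1 : unitInterval) : ℝ)| = 1/2
    by norm_num]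
  ring

/-- Barycentric-type subdivision of 1-chains. -/
noncomputable def subdiv (hX : IsGeodesicSpace X) : ((X × X) →₀ ℚ) →ₗ[ℚ] ((X × X) →₀ ℚ) :=
  Finsupp.lsum ℚ fun e => LinearMap.toSpanSingleton ℚ _
    (Finsupp.single (e.1, midp hX e.1 e.2) 1 + Finsupp.single (midp hX e.1 e.2, e.2) 1)

noncomputable def subdivT (hX : IsGeodesicSpace X) : ((X × X) →₀ ℚ) →ₗ[ℚ] ((X × X × X) →₀ ℚ) :=
  Finsupp.lsum ℚ fun e => LinearMap.toSpanSingleton ℚ _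
    (Finsupp.single (e.1, midp hX e.1 e.2, e.2) 1)

lemma subdiv_key (hX : IsGeodesicSpace X) :
    subdiv hX = (bdry2 X).comp (subdivT hX) + LinearMap.id := by
  apply Finsupp.lhom_ext
  intro e q
  simp only [subdiv, subdivT, LinearMap.add_apply, LinearMap.comp_apply, LinearMap.id_apply,
    Finsupp.lsum_single, LinearMap.toSpanSingleton_apply, bdry2_single, smul_sub, smul_add,
    Finsupp.smul_single, smul_eq_mul, mul_one]
  abel

lemma subdiv_support (hX : IsGeodesicSpace X) {t : ℝ} {c : (X × X) →₀ ℚ}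
    (hc : ↑c.support ⊆ {e : X × X | dist e.1 e.2 < t}) :
    ↑(subdiv hX c).support ⊆ {e : X × X | dist e.1 e.2 < t / 2} := by
  classical
  refine (lsum_support_subset _ c).trans ?_
  refine Set.iUnion₂_subset fun e he => ?_
  intro u hu
  have hde : dist e.1 e.2 < t := hc he
  have : u ∈ ((Finsupp.single (e.1, midp hX e.1 e.2) (1:ℚ)).support ∪
      (Finsupp.single (midp hX e.1 e.2, e.2) (1:ℚ)).support : Finset _) :=
    Finsupp.support_add (by exact_mod_cast hu)
  rw [Finset.mem_union] at this
  rcases this with h1 | h1 <;> rw [Finsupp.support_single_ne_zero _ one_ne_zero] at h1 <;>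
    rw [Finset.mem_singleton] at h1 <;> subst h1 <;>
    simp only [Set.mem_setOf_eq, midp_dist_left, midp_dist_right] <;> linarith

lemma subdiv_sub_self_mem (hX : IsGeodesicSpace X) {r : ℝ} {c : (X × X) →₀ ℚ}
    (hc : ↑c.support ⊆ vrEdges X r) :
    subdiv hX c - c ∈ vrBoundaries X r := by
  have key := congrArg (fun (F : ((X × X) →₀ ℚ) →ₗ[ℚ] ((X × X) →₀ ℚ)) => F c) (subdiv_key hX)
  simp only [LinearMap.add_apply, LinearMap.comp_apply, LinearMap.id_apply] at key
  have : subdiv hX c - c = bdry2 X (subdivT hX c) := by rw [key]; abel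
  rw [this]
  refine mem_vrBoundaries_of_support ?_
  refine (lsum_support_subset _ c).trans ?_
  refine Set.iUnion₂_subset fun e he => ?_
  intro u hu
  have hde : dist e.1 e.2 < r := hc he
  have hd0 : (0:ℝ) ≤ dist e.1 e.2 := dist_nonneg
  rw [Finsupp.support_single_ne_zero _ one_ne_zero] at hu
  simp only [Finset.coe_singleton, Set.mem_singleton_iff] at hu
  subst hu
  refine ⟨?_, ?_, ?_⟩ <;>
    simp only [midp_dist_left, midp_dist_right] <;> linarith

lemma subdiv_cycle (hX : IsGeodesicSpace X) {r : ℝ} (hr : 0 ≤ r) {c : (X × X) →₀ ℚ}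
    (hc : c ∈ vrCycles X r) : subdiv hX c ∈ vrCycles X r := by
  constructor
  · refine (subdiv_support hX hc.1).trans ?_
    intro e he
    simp only [Set.mem_setOf_eq] at he
    exact lt_of_lt_of_le he (by linarith)
  · have key := congrArg (fun (F : ((X × X) →₀ ℚ) →ₗ[ℚ] ((X × X) →₀ ℚ)) => F c) (subdiv_key hX)
    simp only [LinearMap.add_apply, LinearMap.comp_apply, LinearMap.id_apply] at key
    have h0 : bdry1 X (bdry2 X (subdivT hX c)) = 0 := by
      have := congrArg (fun (F : ((X × X × X) →₀ ℚ) →ₗ[ℚ] (X →₀ ℚ)) => F (subdivT hX c))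
        (bdry1_comp_bdry2 X)
      simpa using this
    rw [key, map_add, h0, zero_add, hc.2]

/-- Iterated subdivision: every cycle of `VR^r` is, modulo boundaries in `VR^r`,
a cycle of `VR^s` for any `0 < s ≤ r`. -/
lemma subdivision_exists (hX : IsGeodesicSpace X) {s r : ℝ} (hs : 0 < s) (hsr : s ≤ r)
    {c : (X × X) →₀ ℚ} (hc : c ∈ vrCycles X r) :
    ∃ c' ∈ vrCycles X s, c - c' ∈ vrBoundaries X r := by
  have hr : 0 < r := lt_of_lt_of_le hs hsr
  have main : ∀ k : ℕ, (subdiv hX)^[k] c ∈ vrCycles X r ∧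
      ↑((subdiv hX)^[k] c).support ⊆ {e : X × X | dist e.1 e.2 < r / 2 ^ k} ∧
      c - (subdiv hX)^[k] c ∈ vrBoundaries X r := by
    intro k
    induction k with
    | zero => exact ⟨hc, by simpa [vrEdges] using hc.1, by simp⟩
    | succ k ih =>
      obtain ⟨h1, h2, h3⟩ := ih
      rw [Function.iterate_succ_apply']
      refine ⟨subdiv_cycle hX hr.le h1, ?_, ?_⟩
      · refine (subdiv_support hX h2).trans ?_
        intro e he
        simp only [Set.mem_setOf_eq] at he ⊢
        rw [pow_succ, ← div_div]
        exact he
      · have hb := subdiv_sub_self_mem hX h1.1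
        have : c - subdiv hX ((subdiv hX)^[k] c) =
            (c - (subdiv hX)^[k] c) - (subdiv hX ((subdiv hX)^[k] c) - (subdiv hX)^[k] c) := by
          abel
        rw [this]
        exact sub_mem h3 hb
  obtain ⟨k, hk⟩ := pow_unbounded_of_one_lt (r / s) (one_lt_two (α := ℝ))
  obtain ⟨h1, h2, h3⟩ := main k
  refine ⟨(subdiv hX)^[k] c, ⟨?_, h1.2⟩, h3⟩
  intro e he
  have := h2 he
  simp only [Set.mem_setOf_eq] at this
  have h2k : (0:ℝ) < 2 ^ k := by positivity
  show dist e.1 e.2 < s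
  have : r / 2 ^ k < s := by
    rw [div_lt_iff₀ h2k]
    have := (div_lt_iff₀ hs).1 hk
    linarith [mul_comm s ((2:ℝ) ^ k)]
  linarith [h2 he]

end Subdivision

section Bounds
variable {X : Type*} [MetricSpace X]

lemma vrH1_rank_zero_of_forall_boundary {r : ℝ}
    (h : ∀ c ∈ vrCycles X r, c ∈ vrBoundaries X r) :
    Module.rank ℚ (vrH1 X r) = 0 := by
  have htop : Submodule.comap (vrCycles X r).subtype (vrBoundaries X r) = ⊤ := by
    rw [Submodule.eq_top_iff']
    intro z
    exact h _ z.2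
  haveI : Subsingleton (vrH1 X r) := by
    rw [vrH1]
    exact Submodule.Quotient.subsingleton_iff.2 htop
  exact rank_subsingleton' _ _

lemma vrH1_rank_zero_of_isEmpty [IsEmpty X] (r : ℝ) :
    Module.rank ℚ (vrH1 X r) = 0 := by
  refine vrH1_rank_zero_of_forall_boundary fun c _ => ?_
  have : c = 0 := by
    ext e
    exact (IsEmpty.false e.1).elim
  rw [this]
  exact Submodule.zero_mem _

lemma vrH1_rank_zero_of_diam_lt [CompactSpace X] {r : ℝ}
    (hr : Metric.diam (Set.univ : Set X) < r) :
    Module.rank ℚ (vrH1 X r) = 0 := by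
  classical
  rcases isEmpty_or_nonempty X with hXe | hXn
  · exact vrH1_rank_zero_of_isEmpty r
  obtain ⟨p⟩ := hXn
  refine vrH1_rank_zero_of_forall_boundary fun c hc => ?_
  set cone : ((X × X) →₀ ℚ) →ₗ[ℚ] ((X × X × X) →₀ ℚ) :=
    Finsupp.lsum ℚ fun e => LinearMap.toSpanSingleton ℚ _
      (Finsupp.single (p, e.1, e.2) 1) with hcone
  set L : (X →₀ ℚ) →ₗ[ℚ] ((X × X) →₀ ℚ) :=
    Finsupp.lsum ℚ fun x => LinearMap.toSpanSingleton ℚ _ (Finsupp.single (p, x) 1) with hL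
  have key : (LinearMap.id : ((X × X) →₀ ℚ) →ₗ[ℚ] _) =
      (bdry2 X).comp cone + L.comp (bdry1 X) := by
    apply Finsupp.lhom_ext
    intro e q
    simp only [hcone, hL, LinearMap.add_apply, LinearMap.comp_apply, LinearMap.id_apply,
      bdry1_single, bdry2_single, map_sub, map_add, map_smul, Finsupp.lsum_single,
      LinearMap.toSpanSingleton_apply, smul_sub, smul_add, Finsupp.smul_single,
      smul_eq_mul, mul_one]
    abel
  have hkey := congrArg (fun (F : ((X × X) →₀ ℚ) →ₗ[ℚ] ((X × X) →₀ ℚ)) => F c) key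
  simp only [LinearMap.add_apply, LinearMap.comp_apply, LinearMap.id_apply] at hkey
  rw [hc.2, map_zero, add_zero] at hkey
  rw [hkey]
  refine mem_vrBoundaries_of_support ?_
  refine (lsum_support_subset _ c).trans ?_
  refine Set.iUnion₂_subset fun e _ => ?_
  intro u hu
  rw [Finsupp.support_single_ne_zero _ one_ne_zero] at hu
  simp only [Finset.coe_singleton, Set.mem_singleton_iff] at hu
  subst hu
  have hb : Bornology.IsBounded (Set.univ : Set X) := isCompact_univ.isBounded
  refine ⟨?_, ?_, ?_⟩ <;>
    exact lt_of_le_of_lt (Metric.dist_le_diam_of_mem hb trivial trivial) hr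

lemma persSet_bddAbove [CompactSpace X] (n : ℕ) :
    BddAbove (insert 0 {r : ℝ | 0 < r ∧
      (((n + 1 : ℕ) : Cardinal) ≤ Module.rank ℚ (vrH1 X r))}) := by
  refine ⟨max 0 (Metric.diam (Set.univ : Set X) + 1), ?_⟩
  rintro r (rfl | ⟨hr, hrank⟩)
  · exact le_max_left _ _
  refine le_trans ?_ (le_max_right _ _)
  by_contra hcon
  push_neg at hcon
  have h0 : Module.rank ℚ (vrH1 X r) = 0 :=
    vrH1_rank_zero_of_diam_lt (by linarith)
  rw [h0] at hrank
  simp at hrank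

lemma persSeq_nonneg [CompactSpace X] (n : ℕ) : 0 ≤ persSeq X n :=
  le_csSup (persSet_bddAbove n) (Set.mem_insert _ _)

lemma le_persSeq [CompactSpace X] {n : ℕ} {r : ℝ} (hr : 0 < r)
    (hrank : ((n + 1 : ℕ) : Cardinal) ≤ Module.rank ℚ (vrH1 X r)) :
    r ≤ persSeq X n :=
  le_csSup (persSet_bddAbove n) (Set.mem_insert_of_mem _ ⟨hr, hrank⟩)

end Bounds

section Comparison
universe u v
variable {X : Type u} {Y : Type v} [MetricSpace X] [MetricSpace Y]

lemma rank_le_rank_of_maps [CompactSpace X] (hX : IsGeodesicSpace X)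
    (f : X → Y) (g : Y → X) {δ s : ℝ} (hδ : 0 < δ) (hs : 0 < s)
    (hf : ∀ x x' : X, dist (f x) (f x') < dist x x' + δ)
    (hg : ∀ y y' : Y, dist (g y) (g y') < dist y y' + δ)
    (hgf : ∀ x : X, dist x (g (f x)) < δ) {n : ℕ}
    (hn : ((n + 1 : ℕ) : Cardinal) ≤ Module.rank ℚ (vrH1 X (s + 2 * δ))) :
    ((n + 1 : ℕ) : Cardinal) ≤ Module.rank ℚ (vrH1 Y (s + δ)) := by
  set r : ℝ := s + 2 * δ with hr
  have hgc : EdgeContr g (s + δ) r := by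
    intro y y' hy
    have := hg y y'
    rw [hr]; linarith
  have hfc : EdgeContr f s (s + δ) := by
    intro x x' hx
    have := hf x x'
    linarith
  have hsurj : Function.Surjective (hMap g hgc) := ?_
  case _ =>
    have hl := LinearMap.lift_rank_le_of_surjective (hMap g hgc) hsurj
    have h2 : ((n + 1 : ℕ) : Cardinal.{max u v}) ≤
        Cardinal.lift.{u} (Module.rank ℚ (vrH1 Y (s + δ))) := by
      refine le_trans ?_ hl
      rw [← Cardinal.lift_natCast.{v, u} (n + 1)]
      exact Cardinal.lift_le.2 hn
    rw [← Cardinal.lift_natCast.{u, v} (n + 1)] at h2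
    exact Cardinal.lift_le.1 h2
  intro q
  obtain ⟨z, rfl⟩ := Submodule.Quotient.mk_surjective _ q
  obtain ⟨c', hc', hdiff⟩ := subdivision_exists hX hs (by rw [hr]; linarith) z.2
  refine ⟨Submodule.Quotient.mk ⟨C1 f c', C1_mem_cycles hfc hc'⟩, ?_⟩
  rw [hMap_mk]
  apply (Submodule.Quotient.eq _).2
  show (zMap g hgc ⟨C1 f c', _⟩ : (X × X) →₀ ℚ) - ↑z ∈ vrBoundaries X r
  have hcomp : C1 g (C1 f c') = C1 (g ∘ f) c' := by
    have := congrArg (fun (F : ((X × X) →₀ ℚ) →ₗ[ℚ] ((X × X) →₀ ℚ)) => F c') (C1_comp f g)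
    simpa using this
  show C1 g (C1 f c') - (z : (X × X) →₀ ℚ) ∈ vrBoundaries X r
  rw [hcomp]
  have htri : ∀ x x' : X, dist x x' < s →
      (x, (g ∘ f) x, (g ∘ f) x') ∈ vrTriangles X r ∧
        (x, x', (g ∘ f) x') ∈ vrTriangles X r := by
    intro x x' hd
    have h1 : dist x ((g ∘ f) x) < δ := hgf x
    have h2 : dist x' ((g ∘ f) x') < δ := hgf x'
    have h3 : dist x ((g ∘ f) x') ≤ dist x x' + dist x' ((g ∘ f) x') := dist_triangle _ _ _
    have h4 : dist ((g ∘ f) x) ((g ∘ f) x') < dist (f x) (f x') + δ := hg _ _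
    have h5 : dist (f x) (f x') < dist x x' + δ := hf x x'
    refine ⟨⟨?_, ?_, ?_⟩, ⟨?_, ?_, ?_⟩⟩ <;> simp only [hr] <;> linarith
  have hb1 : C1 (g ∘ f) c' - c' ∈ vrBoundaries X r :=
    homotopy_mem_boundaries htri hc'
  have : C1 (g ∘ f) c' - (z : (X × X) →₀ ℚ) =
      (C1 (g ∘ f) c' - c') - ((z : (X × X) →₀ ℚ) - c') := by abel
  rw [this]
  exact sub_mem hb1 hdiff

lemma persSeq_le_of_maps [CompactSpace X] [CompactSpace Y] (hX : IsGeodesicSpace X)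
    (f : X → Y) (g : Y → X) {δ : ℝ} (hδ : 0 < δ)
    (hf : ∀ x x' : X, dist (f x) (f x') < dist x x' + δ)
    (hg : ∀ y y' : Y, dist (g y) (g y') < dist y y' + δ)
    (hgf : ∀ x : X, dist x (g (f x)) < δ) (n : ℕ) :
    persSeq X n ≤ persSeq Y n + 2 * δ := by
  have hY0 : 0 ≤ persSeq Y n := persSeq_nonneg n
  refine Real.sSup_le ?_ (by linarith)
  rintro r (rfl | ⟨hr, hrank⟩)
  · linarith
  by_cases hr2 : r ≤ 2 * δ
  · linarith
  push_neg at hr2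
  set s : ℝ := r - 2 * δ with hs'
  have hs : 0 < s := by rw [hs']; linarith
  have hkey : ((n + 1 : ℕ) : Cardinal) ≤ Module.rank ℚ (vrH1 Y (s + δ)) := by
    refine rank_le_rank_of_maps hX f g hδ hs hf hg hgf ?_
    have hrs : s + 2 * δ = r := by rw [hs']; ring
    rwa [hrs]
  have hmem : s + δ ≤ persSeq Y n :=
    le_persSeq (by linarith) hkey
  rw [hs'] at hmem
  linarith

end Comparison

section Distortion
variable {X Y : Type*} [MetricSpace X] [MetricSpace Y]

lemma corrDis_pair_bound {R : Set (X × Y)} {x x' : X} {y y' : Y}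
    (hxy : (x, y) ∈ R) (hx'y' : (x', y') ∈ R) {δ : ℝ} (hδ : 0 < δ)
    (hlt : corrDis R < ENNReal.ofReal δ) :
    dist x x' < dist y y' + δ ∧ dist y y' < dist x x' + δ := by
  have h1 : (max (edist x x' - edist y y') (edist y y' - edist x x')) ≤
      ⨆ b ∈ R, max (edist (x, y).1 b.1 - edist (x, y).2 b.2)
        (edist (x, y).2 b.2 - edist (x, y).1 b.1) :=
    le_iSup₂ (f := fun (b : X × Y) (_ : b ∈ R) => max (edist x b.1 - edist y b.2)
      (edist y b.2 - edist x b.1)) (x', y') hx'y'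
  have h2 : (⨆ b ∈ R, max (edist (x, y).1 b.1 - edist (x, y).2 b.2)
      (edist (x, y).2 b.2 - edist (x, y).1 b.1)) ≤ corrDis R :=
    le_iSup₂ (f := fun (a : X × Y) (_ : a ∈ R) => ⨆ b ∈ R,
      max (edist a.1 b.1 - edist a.2 b.2) (edist a.2 b.2 - edist a.1 b.1)) (x, y) hxy
  have hmax := lt_of_le_of_lt (le_trans h1 h2) hlt
  constructor
  · have hlt1 : edist x x' - edist y y' < ENNReal.ofReal δ :=
      lt_of_le_of_lt (le_max_left _ _) hmax
    rw [edist_dist, edist_dist, ← ENNReal.ofReal_sub _ dist_nonneg,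
      ENNReal.ofReal_lt_ofReal_iff hδ] at hlt1
    linarith
  · have hlt1 : edist y y' - edist x x' < ENNReal.ofReal δ :=
      lt_of_le_of_lt (le_max_right _ _) hmax
    rw [edist_dist, edist_dist, ← ENNReal.ofReal_sub _ dist_nonneg,
      ENNReal.ofReal_lt_ofReal_iff hδ] at hlt1
    linarith

lemma abs_persSeq_sub_le [CompactSpace X] [CompactSpace Y]
    (hX : IsGeodesicSpace X) (hY : IsGeodesicSpace Y)
    {R : Set (X × Y)} (hR : IsCorrespondence R) {δ : ℝ} (hδ : 0 < δ)
    (hlt : corrDis R < ENNReal.ofReal δ) (n : ℕ) :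
    |persSeq X n - persSeq Y n| ≤ 2 * δ := by
  classical
  set f : X → Y := fun x => (hR.1 x).choose with hfdef
  have hfR : ∀ x : X, (x, f x) ∈ R := fun x => (hR.1 x).choose_spec
  set g : Y → X := fun y => (hR.2 y).choose with hgdef
  have hgR : ∀ y : Y, (g y, y) ∈ R := fun y => (hR.2 y).choose_spec
  have hf : ∀ x x' : X, dist (f x) (f x') < dist x x' + δ := fun x x' =>
    (corrDis_pair_bound (hfR x) (hfR x') hδ hlt).2
  have hg : ∀ y y' : Y, dist (g y) (g y') < dist y y' + δ := fun y y' =>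
    (corrDis_pair_bound (hgR y) (hgR y') hδ hlt).1
  have hgf : ∀ x : X, dist x (g (f x)) < δ := by
    intro x
    have := (corrDis_pair_bound (hfR x) (hgR (f x)) hδ hlt).1
    simpa using this
  have hfg : ∀ y : Y, dist y (f (g y)) < δ := by
    intro y
    have := (corrDis_pair_bound (hgR y) (hfR (g y)) hδ hlt).2
    rw [dist_self, zero_add] at this
    exact this
  rw [abs_sub_le_iff]
  constructor
  · have := persSeq_le_of_maps hX f g hδ hf hg hgf n
    linarith
  · have := persSeq_le_of_maps hY g f hδ hg hf hfg n
    linarith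

end Distortion
/-- stability of persistence sequences,
`‖(aₙ^X) − (aₙ^Y)‖_∞ ≤ 4·d_GH(X,Y)` for compact geodesic spaces with finite first Betti
numbers. -/
theorem persSeq_stability {X Y : Type*} [MetricSpace X] [MetricSpace Y]
    [CompactSpace X] [CompactSpace Y]
    (hX : IsGeodesicSpace X) (hY : IsGeodesicSpace Y)
    (hfinX : firstBetti X < Cardinal.aleph0) (hfinY : firstBetti Y < Cardinal.aleph0) :
    ∀ n : ℕ, ENNReal.ofReal |persSeq X n - persSeq Y n| ≤ 4 * ghDist X Y := by
  intro n
  set d : ℝ := |persSeq X n - persSeq Y n| with hd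
  have hd0 : 0 ≤ d := abs_nonneg _
  have key : ∀ R : Set (X × Y), IsCorrespondence R →
      ENNReal.ofReal (d / 2) ≤ corrDis R := by
    intro R hR
    rcases eq_top_or_lt_top (corrDis R) with htop | hfin
    · rw [htop]; exact le_top
    set D : ℝ := (corrDis R).toReal with hD
    have hD0 : 0 ≤ D := ENNReal.toReal_nonneg
    have hstep : ∀ δ : ℝ, D < δ → d ≤ 2 * δ := by
      intro δ hδD
      have hδ : 0 < δ := lt_of_le_of_lt hD0 hδD
      have hlt : corrDis R < ENNReal.ofReal δ := by
        rw [ENNReal.lt_ofReal_iff_toReal_lt hfin.ne]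
        exact hδD
      exact abs_persSeq_sub_le hX hY hR hδ hlt n
    have hd2 : d / 2 ≤ D := by
      by_contra hcon
      push_neg at hcon
      have h1 : D < (D + d / 2) / 2 := by linarith
      have h2 := hstep _ h1
      linarith
    calc ENNReal.ofReal (d / 2) ≤ ENNReal.ofReal D := ENNReal.ofReal_le_ofReal hd2
      _ = corrDis R := ENNReal.ofReal_toReal hfin.ne
  have hIinf : ENNReal.ofReal (d / 2) ≤
      ⨅ R ∈ {R : Set (X × Y) | IsCorrespondence R}, corrDis R :=
    le_iInf₂ key
  have hgh : (4 : ℝ≥0∞) * ghDist X Y =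
      2 * ⨅ R ∈ {R : Set (X × Y) | IsCorrespondence R}, corrDis R := by
    rw [ghDist, ← mul_assoc, show (4 : ℝ≥0∞) * 2⁻¹ = 2 by
      rw [show (4 : ℝ≥0∞) = 2 * 2 by norm_num, mul_assoc,
        ENNReal.mul_inv_cancel two_ne_zero (by norm_num), mul_one]]
  have hsplit : ENNReal.ofReal d = 2 * ENNReal.ofReal (d / 2) := by
    rw [show d = 2 * (d / 2) by ring, ENNReal.ofReal_mul (by norm_num)]
    norm_num
  rw [hgh, hsplit]
  exact mul_le_mul_right hIinf 2
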